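/- Let n = 1 and K ⊆ Z_+ be a finite set containing 0, and let s : K → ℂ with s_0 > 0. Then there exists a compactly supported non-negative Borel measure μ on ℂ such that ∫_ℂ z^k dμ(z) = s_k for all k ∈ K. -/

import Mathlib

/-!
Put atoms at the points `t ζ ^ j`, where `ζ` is a primitive `m`-th root of unity with
`m > 2 max K`, with weights `p (ζ ^ j) / m` for the real trigonometric polynomial
`p u = s₀ + ∑ₖ 2 Re (s_k t⁻ᵏ ūᵏ)` (`k ∈ K \ {0}`). Averaging `p u · uˡ` over the `m`-th roots
of unity extracts the `l`-th Fourier coefficient of `p`, because `|l - k| < m` and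
`0 < l + k < m`; hence the `l`-th moment is `tˡ · s_l t⁻ˡ = s_l`. The weights are nonnegative
as soon as `t` is so large that `∑ₖ 2 |s_k| t⁻ᵏ ≤ s₀`.
-/

open MeasureTheory Finset Filter Topology ComplexConjugate

section AtomicMeasure

variable {X ι E : Type*} [MeasurableSpace X] [MeasurableSingletonClass X]
  [NormedAddCommGroup E]

theorem finsetSum_smul_dirac_apply_compl_eq_zero (s : Finset ι) (c : ι → ENNReal) {x : ι → X}
    {S : Set X} (hx : ∀ i ∈ s, x i ∈ S) : (∑ i ∈ s, c i • Measure.dirac (x i)) Sᶜ = 0 := by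
  rw [Measure.finsetSum_apply]
  exact sum_eq_zero fun i hi => by simp [Measure.dirac_apply, hx i hi]

theorem integrable_finsetSum_smul_dirac (f : X → E) (s : Finset ι) {c : ι → ENNReal}
    (hc : ∀ i ∈ s, c i ≠ ⊤) (x : ι → X) : Integrable f (∑ i ∈ s, c i • Measure.dirac (x i)) :=
  integrable_finsetSum_measure.2 fun i hi =>
    (integrable_dirac enorm_lt_top).smul_measure (hc i hi)

theorem integral_finsetSum_ofReal_smul_dirac [NormedSpace ℝ E] [CompleteSpace E] (f : X → E)
    (s : Finset ι) {w : ι → ℝ} (hw : ∀ i ∈ s, 0 ≤ w i) (x : ι → X) :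
    ∫ y, f y ∂(∑ i ∈ s, ENNReal.ofReal (w i) • Measure.dirac (x i)) = ∑ i ∈ s, w i • f (x i) := by
  rw [integral_finsetSum_measure fun i _ =>
    (integrable_dirac enorm_lt_top).smul_measure ENNReal.ofReal_ne_top]
  refine sum_congr rfl fun i hi => ?_
  rw [integral_smul_measure, integral_dirac, ENNReal.toReal_ofReal (hw i hi)]

end AtomicMeasure

theorem IsPrimitiveRoot.sum_range_pow_zpow {K : Type*} [Field K] {ζ : K} {m : ℕ}
    (hζ : IsPrimitiveRoot ζ m) (d : ℤ) :
    ∑ j ∈ range m, (ζ ^ j) ^ d = if (m : ℤ) ∣ d then (m : K) else 0 := by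
  have hswap : ∀ j : ℕ, (ζ ^ j) ^ d = (ζ ^ d) ^ j := fun j => by
    rw [← zpow_natCast, ← zpow_mul, ← zpow_natCast, ← zpow_mul, mul_comm]
  simp only [hswap]
  split_ifs with h
  · simp [(hζ.zpow_eq_one_iff_dvd d).2 h]
  · rw [geom_sum_eq (mt (hζ.zpow_eq_one_iff_dvd d).1 h), ← zpow_natCast, ← zpow_mul, mul_comm,
      zpow_mul, zpow_natCast, hζ.pow_eq_one, one_zpow, sub_self, zero_div]

noncomputable def realTrigPoly (r : ℝ) (K : Finset ℕ) (c : ℕ → ℂ) (u : ℂ) : ℝ :=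
  r + ∑ k ∈ K, 2 * (c k * conj u ^ k).re

section RealTrigPoly

variable {r : ℝ} {K : Finset ℕ} {c : ℕ → ℂ} {u : ℂ}

theorem realTrigPoly_nonneg (hu : ‖u‖ = 1) (hc : ∑ k ∈ K, 2 * ‖c k‖ ≤ r) :
    0 ≤ realTrigPoly r K c u := by
  have hterm : ∀ k ∈ K, -(2 * ‖c k‖) ≤ 2 * (c k * conj u ^ k).re := fun k _ => by
    have h := Complex.abs_re_le_norm (c k * conj u ^ k)
    rw [norm_mul, norm_pow, Complex.norm_conj, hu, one_pow, mul_one] at h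
    linarith [neg_abs_le (c k * conj u ^ k).re]
  have := sum_le_sum hterm
  rw [sum_neg_distrib] at this
  unfold realTrigPoly
  linarith

theorem ofReal_realTrigPoly (hu : ‖u‖ = 1) :
    (realTrigPoly r K c u : ℂ) =
      r + ∑ k ∈ K, (c k * u ^ (-(k : ℤ)) + conj (c k) * u ^ (k : ℤ)) := by
  have hconj : conj u = u⁻¹ := (Complex.inv_eq_conj hu).symm
  simp only [realTrigPoly, Complex.ofReal_add, Complex.ofReal_sum]
  congr 1
  refine sum_congr rfl fun k _ => ?_
  rw [← Complex.add_conj, map_mul, map_pow, Complex.conj_conj, hconj, zpow_neg, zpow_natCast,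
    inv_pow, add_comm]

theorem sum_realTrigPoly_mul_pow {ζ : ℂ} {m l : ℕ} (hζ : IsPrimitiveRoot ζ m) (hl : l < m)
    (hK : ∀ k ∈ K, 0 < k ∧ l + k < m) :
    ∑ j ∈ range m, (realTrigPoly r K c (ζ ^ j) : ℂ) * (ζ ^ j) ^ l =
      m * ((if l = 0 then (r : ℂ) else 0) + if l ∈ K then c l else 0) := by
  have hm : m ≠ 0 := by omega
  have hnorm : ∀ j : ℕ, ‖ζ ^ j‖ = 1 := fun j => by rw [norm_pow, hζ.norm'_eq_one hm, one_pow]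
  have hexpand : ∀ j : ℕ, (realTrigPoly r K c (ζ ^ j) : ℂ) * (ζ ^ j) ^ l =
      r * (ζ ^ j) ^ (l : ℤ) + ∑ k ∈ K, (c k * (ζ ^ j) ^ ((l : ℤ) - k) +
        conj (c k) * (ζ ^ j) ^ ((l : ℤ) + k)) := fun j => by
    have hne : ζ ^ j ≠ 0 := norm_ne_zero_iff.1 (by simp [hnorm])
    rw [ofReal_realTrigPoly (hnorm j), add_mul, sum_mul]
    simp only [sub_eq_add_neg, zpow_add₀ hne, zpow_natCast]
    congr 1
    exact sum_congr rfl fun k _ => by ring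
  have hdvd_l : (m : ℤ) ∣ l ↔ l = 0 := by
    rw [Int.natCast_dvd_natCast]
    exact ⟨fun h => Nat.eq_zero_of_dvd_of_lt h hl, fun h => h ▸ dvd_zero m⟩
  have hdvd_sub : ∀ k ∈ K, ((m : ℤ) ∣ l - k ↔ l = k) := fun k hk => by
    have := hK k hk
    refine ⟨fun h => ?_, fun h => by simp [h]⟩
    have := Int.eq_zero_of_abs_lt_dvd h (by rw [abs_lt]; omega)
    omega
  have hndvd_add : ∀ k ∈ K, ¬ (m : ℤ) ∣ l + k := fun k hk h => by
    have := hK k hk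
    have := Int.eq_zero_of_abs_lt_dvd h (by rw [abs_lt]; omega)
    omega
  have hcoeff : ∀ k ∈ K, c k * (if (m : ℤ) ∣ l - k then (m : ℂ) else 0) +
      conj (c k) * (if (m : ℤ) ∣ l + k then (m : ℂ) else 0) = if l = k then m * c l else 0 :=
    fun k hk => by
      simp only [hdvd_sub k hk, hndvd_add k hk, if_false, mul_zero, add_zero]
      split_ifs with h <;> simp [h, mul_comm]
  simp only [hexpand]
  rw [sum_add_distrib, sum_comm]
  simp only [sum_add_distrib, ← mul_sum, hζ.sum_range_pow_zpow, hdvd_l]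
  rw [← sum_add_distrib, sum_congr rfl hcoeff, sum_ite_eq]
  split_ifs <;> ring

end RealTrigPoly

noncomputable def rootsOfUnityMeasure (p : ℂ → ℝ) (ζ : ℂ) (m : ℕ) (t : ℝ) : Measure ℂ :=
  ∑ j ∈ range m, ENNReal.ofReal (p (ζ ^ j) / m) • Measure.dirac ((t : ℂ) * ζ ^ j)

section RootsOfUnityMeasure

variable {p : ℂ → ℝ} {ζ : ℂ} {m : ℕ}

theorem rootsOfUnityMeasure_compl_sphere (hζ : IsPrimitiveRoot ζ m) {t : ℝ} (ht : 0 ≤ t) :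
    rootsOfUnityMeasure p ζ m t (Metric.sphere 0 t)ᶜ = 0 :=
  finsetSum_smul_dirac_apply_compl_eq_zero _ _ fun j hj => by
    simp [hζ.norm'_eq_one (Nat.ne_zero_of_lt (mem_range.1 hj)), abs_of_nonneg ht]

theorem integrable_rootsOfUnityMeasure (f : ℂ → ℂ) (t : ℝ) :
    Integrable f (rootsOfUnityMeasure p ζ m t) :=
  integrable_finsetSum_smul_dirac _ _ (fun _ _ => ENNReal.ofReal_ne_top) _

theorem integral_pow_rootsOfUnityMeasure_realTrigPoly {r : ℝ} {K : Finset ℕ} {c : ℕ → ℂ}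
    {l : ℕ} (hζ : IsPrimitiveRoot ζ m) (hl : l < m) (hK : ∀ k ∈ K, 0 < k ∧ l + k < m)
    (hc : ∑ k ∈ K, 2 * ‖c k‖ ≤ r) (t : ℝ) :
    ∫ z, z ^ l ∂rootsOfUnityMeasure (realTrigPoly r K c) ζ m t =
      t ^ l * ((if l = 0 then (r : ℂ) else 0) + if l ∈ K then c l else 0) := by
  have hm : (m : ℂ) ≠ 0 := by exact_mod_cast (show m ≠ 0 by omega)
  have hw : ∀ j ∈ range m, 0 ≤ realTrigPoly r K c (ζ ^ j) / m := fun j _ =>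
    div_nonneg (realTrigPoly_nonneg (by rw [norm_pow, hζ.norm'_eq_one (by omega), one_pow]) hc)
      m.cast_nonneg
  rw [rootsOfUnityMeasure, integral_finsetSum_ofReal_smul_dirac _ _ hw]
  calc ∑ j ∈ range m, (realTrigPoly r K c (ζ ^ j) / m) • ((t : ℂ) * ζ ^ j) ^ l
      = (t : ℂ) ^ l / m * ∑ j ∈ range m, (realTrigPoly r K c (ζ ^ j) : ℂ) * (ζ ^ j) ^ l := by
        simp only [mul_sum, Complex.real_smul, mul_pow, Complex.ofReal_div,
          Complex.ofReal_natCast]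
        exact sum_congr rfl fun _ _ => by ring
    _ = _ := by
        rw [sum_realTrigPoly_mul_pow hζ hl hK]
        field_simp

end RootsOfUnityMeasure

theorem exists_sum_div_pow_le (K : Finset ℕ) (hK : ∀ k ∈ K, k ≠ 0) (a : ℕ → ℝ) {r : ℝ}
    (hr : 0 < r) : ∃ t : ℝ, 0 < t ∧ ∑ k ∈ K, a k / t ^ k ≤ r := by
  have hlim : Tendsto (fun t : ℝ => ∑ k ∈ K, a k / t ^ k) atTop (𝓝 0) := by
    simpa using tendsto_finsetSum K fun k hk =>
      tendsto_const_nhds.div_atTop (tendsto_pow_atTop (α := ℝ) (hK k hk))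
  exact ((eventually_gt_atTop 0).and (hlim.eventually (ge_mem_nhds hr))).exists

theorem truncated_moment_problem_C_one_dim_general
    (K : Finset ℕ) (s : ℕ → ℂ)
    (hs0 : ∃ r : ℝ, 0 < r ∧ s 0 = (r : ℂ)) :
    ∃ μ : Measure ℂ,
      (∃ S : Set ℂ, IsCompact S ∧ μ Sᶜ = 0) ∧
      ∀ k ∈ K,
        Integrable (fun z : ℂ => z ^ k) μ ∧
        ∫ z : ℂ, z ^ k ∂μ = s k := by
  obtain ⟨r, hr, hs0⟩ := hs0
  set K' := K.erase 0
  have hK' : ∀ k ∈ K', k ≠ 0 ∧ k ≤ K.sup id := fun k hk =>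
    ⟨ne_of_mem_erase hk, le_sup (f := id) (mem_of_mem_erase hk)⟩
  set m := 2 * K.sup id + 1
  have hζ := Complex.isPrimitiveRoot_exp m (by omega)
  obtain ⟨t, ht, hsmall⟩ :=
    exists_sum_div_pow_le K' (fun k hk => (hK' k hk).1) (fun k => 2 * ‖s k‖) hr
  set c : ℕ → ℂ := fun k => s k / (t : ℂ) ^ k
  have hc : ∑ k ∈ K', 2 * ‖c k‖ ≤ r := by
    simpa [c, norm_div, abs_of_pos ht, mul_div_assoc] using hsmall
  refine ⟨rootsOfUnityMeasure (realTrigPoly r K' c) _ m t,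
    ⟨_, isCompact_sphere 0 t, rootsOfUnityMeasure_compl_sphere hζ ht.le⟩,
    fun k hk => ⟨integrable_rootsOfUnityMeasure _ t, ?_⟩⟩
  have hkM : k ≤ K.sup id := le_sup (f := id) hk
  rw [integral_pow_rootsOfUnityMeasure_realTrigPoly hζ (by omega)
    (fun k' hk' => by have := hK' k' hk'; omega) hc]
  rcases eq_or_ne k 0 with rfl | hk0
  · simp [K', hs0]
  · have ht' : (t : ℂ) ^ k ≠ 0 := pow_ne_zero k (by exact_mod_cast ht.ne')
    simpa [K', c, hk0, hk] using mul_div_cancel₀ (s k) ht'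

theorem truncated_moment_problem_C_one_dim
    (K : Finset ℕ) (h0 : 0 ∈ K) (s : ℕ → ℂ)
    (hs0 : ∃ r : ℝ, 0 < r ∧ s 0 = (r : ℂ)) :
    ∃ μ : Measure ℂ,
      (∃ S : Set ℂ, IsCompact S ∧ μ Sᶜ = 0) ∧
      ∀ k ∈ K,
        Integrable (fun z : ℂ => z ^ k) μ ∧
        ∫ z : ℂ, z ^ k ∂μ = s k :=
  truncated_moment_problem_C_one_dim_general K s hs0
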